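/- arXiv:2402.11410 — 3 statements merged into one kernel-verified Lean document; each statement's English description precedes it below -/
import Mathlib

section
/- For any sequence of predictions p^{1:T} in [0,1]^T and outcomes y^{1:T} in {0,1}^T, the distance to calibration CalDist(p^{1:T}, y^{1:T}) is at most the expected calibration error ECE(p^{1:T}, y^{1:T}). -/
open Finset
open scoped Classical

noncomputable def ECE {T : ℕ} (p y : Fin T → ℝ) : ℝ :=
  ∑ v ∈ Finset.univ.image p, |∑ t, if p t = v then p t - y t else 0|

noncomputable def calDist {T : ℕ} (p y : Fin T → ℝ) : ℝ :=
  sInf {c | ∃ q : Fin T → ℝ, ECE q y = 0 ∧ c = ∑ t, |p t - q t|}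

noncomputable def bias {T : ℕ} (p y : Fin T → ℝ) (t : ℕ) (v : ℝ) : ℝ :=
  ∑ s ∈ Finset.univ.filter (fun s : Fin T => (s : ℕ) < t), if p s = v then p s - y s else 0

theorem calDist_le_ECE {T : ℕ} (p y : Fin T → ℝ)
    (hp : ∀ t, p t ∈ Set.Icc (0 : ℝ) 1) (hy : ∀ t, y t = 0 ∨ y t = 1) :
    calDist p y ≤ ECE p y := by
  classical
  -- level set of p containing t
  set F : Fin T → Finset (Fin T) := fun t => Finset.univ.filter (fun s => p s = p t) with hF
  set q : Fin T → ℝ := fun t => (∑ s ∈ F t, y s) / (F t).card with hq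
  have hmemF : ∀ t, t ∈ F t := by
    intro t; simp [hF]
  have hcard : ∀ t, ((F t).card : ℝ) ≠ 0 := by
    intro t
    have : (F t).Nonempty := ⟨t, hmemF t⟩
    exact_mod_cast Finset.card_ne_zero_of_mem (hmemF t)
  have hFeq : ∀ t s, s ∈ F t → F s = F t := by
    intro t s hs
    have hps : p s = p t := by simpa [hF] using hs
    simp [hF, hps]
  have hqeq : ∀ t s, s ∈ F t → q s = q t := by
    intro t s hs; simp [hq, hFeq t s hs]
  -- key: sum over fiber of (q t - y s) is zero
  have hzero : ∀ t, ∑ s ∈ F t, (q t - y s) = 0 := by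
    intro t
    rw [Finset.sum_sub_distrib, Finset.sum_const, nsmul_eq_mul]
    simp only [hq]
    rw [mul_comm, div_mul_cancel₀ _ (hcard t), sub_self]
  have hECEq : ECE q y = 0 := by
    unfold ECE
    apply Finset.sum_eq_zero
    intro w hw
    rw [abs_eq_zero]
    have hfib : (∑ v ∈ Finset.univ.image p, ∑ t ∈ Finset.univ.filter (fun t => p t = v),
        (if q t = w then q t - y t else 0)) = ∑ t, (if q t = w then q t - y t else 0) :=
      Finset.sum_fiberwise_of_maps_to (fun t _ => Finset.mem_image_of_mem p (Finset.mem_univ t)) _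
    rw [← hfib]
    apply Finset.sum_eq_zero
    intro v hv
    obtain ⟨t0, _, ht0⟩ := Finset.mem_image.mp hv
    have hfil : Finset.univ.filter (fun t => p t = v) = F t0 := by
      simp [hF, ht0]
    rw [hfil]
    by_cases hcw : q t0 = w
    · have : ∀ s ∈ F t0, (if q s = w then q s - y s else 0) = q t0 - y s := by
        intro s hs
        rw [hqeq t0 s hs, if_pos hcw]
      rw [Finset.sum_congr rfl this, hzero t0]
    · apply Finset.sum_eq_zero
      intro s hs
      rw [hqeq t0 s hs, if_neg hcw]
  -- cost equals ECE
  have hcost : (∑ t, |p t - q t|) = ECE p y := by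
    unfold ECE
    have hfib : (∑ v ∈ Finset.univ.image p, ∑ t ∈ Finset.univ.filter (fun t => p t = v),
        |p t - q t|) = ∑ t, |p t - q t| :=
      Finset.sum_fiberwise_of_maps_to (fun t _ => Finset.mem_image_of_mem p (Finset.mem_univ t)) _
    rw [← hfib]
    apply Finset.sum_congr rfl
    intro v hv
    obtain ⟨t0, _, ht0⟩ := Finset.mem_image.mp hv
    have hfil : Finset.univ.filter (fun t => p t = v) = F t0 := by
      simp [hF, ht0]
    have hifsum : (∑ t, if p t = v then p t - y t else 0)
        = ∑ t ∈ F t0, (p t - y t) := by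
      rw [← hfil, Finset.sum_filter]
    rw [hfil, hifsum]
    have hpconst : ∀ s ∈ F t0, p s = p t0 := by
      intro s hs; simpa [hF] using hs
    have h1 : ∀ s ∈ F t0, |p s - q s| = |p t0 - q t0| := by
      intro s hs; rw [hpconst s hs, hqeq t0 s hs]
    rw [Finset.sum_congr rfl h1, Finset.sum_const, nsmul_eq_mul]
    have h2 : ∀ s ∈ F t0, p s - y s = p t0 - y s := by
      intro s hs; rw [hpconst s hs]
    rw [Finset.sum_congr rfl h2]
    have h3 : ∑ s ∈ F t0, (p t0 - y s) = ((F t0).card : ℝ) * (p t0 - q t0) := by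
      have := hzero t0
      rw [Finset.sum_sub_distrib, Finset.sum_const, nsmul_eq_mul] at this ⊢
      have hqv : ((F t0).card : ℝ) * q t0 = ∑ s ∈ F t0, y s := by
        simp only [hq]
        rw [mul_comm]
        exact div_mul_cancel₀ _ (hcard t0)
      rw [mul_sub, hqv]
    rw [h3, abs_mul, abs_of_nonneg (by positivity : (0:ℝ) ≤ ((F t0).card : ℝ))]
  -- conclude via csInf_le
  have hbdd : BddBelow {c | ∃ q : Fin T → ℝ, ECE q y = 0 ∧ c = ∑ t, |p t - q t|} := by
    refine ⟨0, ?_⟩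
    rintro c ⟨q', _, rfl⟩
    exact Finset.sum_nonneg fun t _ => abs_nonneg _
  have hmem : ECE p y ∈ {c | ∃ q : Fin T → ℝ, ECE q y = 0 ∧ c = ∑ t, |p t - q t|} :=
    ⟨q, hECEq, hcost.symm⟩
  exact csInf_le hbdd hmem
end

section
/- The One-Step-Ahead algorithm, which at each round t selects adjacent grid points p_i = i/m, p_{i+1} = (i+1)/m with running biases α_{t−1}(p_i) ≤ 0 and α_{t−1}(p_{i+1}) ≥ 0 and then, after observing y^t ∈ {0,1}, predicts p̃^t = argmin_{p ∈ {p_i, p_{i+1}}} |p − y^t|, satisfies ECE(p̃^{1:T}, y^{1:T}) ≤ m for every outcome sequence y^{1:T} ∈ {0,1}^T. -/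
open Finset
open scoped Classical

lemma bias_succ {T : ℕ} (p y : Fin T → ℝ) (n : ℕ) (v : ℝ) :
    bias p y (n + 1) v =
      bias p y n v + (if h : n < T then (if p ⟨n, h⟩ = v then p ⟨n, h⟩ - y ⟨n, h⟩ else 0) else 0) := by
  unfold bias
  by_cases h : n < T
  · rw [dif_pos h]
    have hset : (Finset.univ.filter (fun s : Fin T => (s : ℕ) < n + 1)) =
        insert (⟨n, h⟩ : Fin T) (Finset.univ.filter (fun s : Fin T => (s : ℕ) < n)) := by
      ext s
      simp only [Finset.mem_filter, Finset.mem_univ, true_and, Finset.mem_insert]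
      constructor
      · intro hs
        rcases Nat.lt_succ_iff_lt_or_eq.mp hs with h1 | h1
        · exact Or.inr h1
        · exact Or.inl (Fin.ext h1)
      · rintro (rfl | hs)
        · exact Nat.lt_succ_self n
        · exact Nat.lt_succ_of_lt hs
    rw [hset, Finset.sum_insert (by simp)]
    ring
  · rw [dif_neg h]
    have hset : (Finset.univ.filter (fun s : Fin T => (s : ℕ) < n + 1)) =
        (Finset.univ.filter (fun s : Fin T => (s : ℕ) < n)) := by
      ext s
      simp only [Finset.mem_filter, Finset.mem_univ, true_and]
      have := s.isLt
      omega
    rw [hset]; ring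

theorem one_step_ahead_ECE_le {T m : ℕ} (hm : 1 ≤ m)
    (y pt : Fin T → ℝ) (i : Fin T → ℕ)
    (hy : ∀ t, y t = 0 ∨ y t = 1)
    (hi : ∀ t, i t < m)
    (hsign : ∀ t : Fin T, bias pt y t ((i t : ℝ) / m) ≤ 0 ∧
      bias pt y t (((i t : ℝ) + 1) / m) ≥ 0)
    (hchoice : ∀ t : Fin T, pt t = (i t : ℝ) / m ∨ pt t = ((i t : ℝ) + 1) / m)
    (hargmin : ∀ t : Fin T, ∀ v ∈ ({(i t : ℝ) / m, ((i t : ℝ) + 1) / m} : Set ℝ),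
      |pt t - y t| ≤ |v - y t|) :
    ECE pt y ≤ m := by
  have hm0 : (0 : ℝ) < m := by exact_mod_cast Nat.lt_of_lt_of_le Nat.zero_lt_one hm
  have hilt : ∀ t : Fin T, ((i t : ℝ)) / m ≤ 1 := fun t => by
    rw [div_le_one hm0]; exact_mod_cast (hi t).le
  have hilt' : ∀ t : Fin T, ((i t : ℝ) + 1) / m ≤ 1 := fun t => by
    rw [div_le_one hm0]
    have : (i t : ℝ) + 1 ≤ m := by exact_mod_cast (hi t)
    exact this
  -- y t = 0 forces left point, y t = 1 forces right point
  have hleft : ∀ t : Fin T, y t = 0 → pt t = (i t : ℝ) / m := by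
    intro t ht
    rcases hchoice t with h | h
    · exact h
    · exfalso
      have h2 := hargmin t ((i t : ℝ) / m) (Or.inl rfl)
      rw [ht, h, sub_zero, sub_zero, abs_of_nonneg (by positivity),
        abs_of_nonneg (by positivity)] at h2
      have := (div_le_div_iff_of_pos_right hm0).mp h2
      linarith
  have hright : ∀ t : Fin T, y t = 1 → pt t = ((i t : ℝ) + 1) / m := by
    intro t ht
    rcases hchoice t with h | h
    · exfalso
      have h2 := hargmin t (((i t : ℝ) + 1) / m) (Or.inr rfl)
      rw [ht, h, abs_of_nonpos (by linarith [hilt t]),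
        abs_of_nonpos (by linarith [hilt' t])] at h2
      have h3 : ((i t : ℝ) + 1) / m ≤ (i t : ℝ) / m := by linarith
      have := (div_le_div_iff_of_pos_right hm0).mp h3
      linarith
    · exact h
  -- invariant
  have key : ∀ n : ℕ, ∀ v : ℝ, 0 ≤ v → v ≤ 1 →
      v - 1 ≤ bias pt y n v ∧ bias pt y n v ≤ v := by
    intro n
    induction n with
    | zero =>
      intro v hv0 hv1
      have : bias pt y 0 v = 0 := by
        unfold bias
        rw [Finset.filter_false_of_mem (fun s _ => Nat.not_lt_zero _), Finset.sum_empty]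
      rw [this]
      constructor <;> linarith
    | succ n ih =>
      intro v hv0 hv1
      rw [bias_succ]
      by_cases h : n < T
      · rw [dif_pos h]
        set t : Fin T := ⟨n, h⟩ with htdef
        by_cases hp : pt t = v
        · rw [if_pos hp]
          have hIH := ih v hv0 hv1
          rcases hy t with hy0 | hy1
          · -- y = 0, pt t = i t / m, bias ≤ 0 at that point
            have hpl := hleft t hy0
            have hs := (hsign t).1
            rw [← hpl, hp] at hs
            have hcoe : ((t : ℕ) : ℕ) = n := rfl
            rw [hy0, hp]
            constructor <;> [linarith; linarith]
          · have hpr := hright t hy1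
            have hs := (hsign t).2
            rw [← hpr, hp] at hs
            rw [hy1, hp]
            constructor <;> [linarith; linarith]
        · rw [if_neg hp, add_zero]
          exact ih v hv0 hv1
      · rw [dif_neg h, add_zero]
        exact ih v hv0 hv1
  -- bias at value 0 is zero throughout (each contributing term vanishes)
  have hterm0 : ∀ t : Fin T, (if pt t = 0 then pt t - y t else 0) = 0 := by
    intro t
    by_cases hp : pt t = 0
    · rw [if_pos hp]
      rcases hy t with hy0 | hy1
      · rw [hp, hy0]; ring
      · exfalso
        have hpr := hright t hy1
        rw [hp] at hpr
        have : ((i t : ℝ) + 1) / m = 0 := hpr.symm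
        have hpos : 0 < ((i t : ℝ) + 1) / m := by positivity
        linarith
    · rw [if_neg hp]
  -- final sum over univ equals bias at T
  have hfinal : ∀ v : ℝ, (∑ t, if pt t = v then pt t - y t else 0) = bias pt y T v := by
    intro v
    unfold bias
    congr 1
    ext s
    simp [s.isLt]
  -- range of pt values
  have hv01 : ∀ v ∈ Finset.univ.image pt, 0 ≤ v ∧ v ≤ 1 := by
    intro v hv
    rcases Finset.mem_image.mp hv with ⟨t, _, rfl⟩
    rcases hchoice t with h | h <;> rw [h]
    · exact ⟨by positivity, hilt t⟩
    · exact ⟨by positivity, hilt' t⟩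
  -- grid superset
  set G : Finset ℝ := Finset.image (fun j : ℕ => (j : ℝ) / m) (Finset.range (m + 1)) with hG
  have hsub : Finset.univ.image pt ⊆ G := by
    intro v hv
    rcases Finset.mem_image.mp hv with ⟨t, _, rfl⟩
    rcases hchoice t with h | h <;> rw [h] <;> apply Finset.mem_image.mpr
    · exact ⟨i t, Finset.mem_range.mpr (by have := hi t; omega : i t < m + 1), rfl⟩
    · exact ⟨i t + 1, Finset.mem_range.mpr (by have := hi t; omega : i t + 1 < m + 1),
        by push_cast; ring⟩
  have h0G : (0 : ℝ) ∈ G := Finset.mem_image.mpr ⟨0, Finset.mem_range.mpr (by omega), by simp⟩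
  -- now bound ECE
  unfold ECE
  have hdrop : ∑ v ∈ Finset.univ.image pt, |∑ t, if pt t = v then pt t - y t else 0|
      = ∑ v ∈ (Finset.univ.image pt).erase 0, |∑ t, if pt t = v then pt t - y t else 0| := by
    by_cases h0 : (0 : ℝ) ∈ Finset.univ.image pt
    · rw [← Finset.sum_erase_add _ _ h0]
      simp [hterm0]
    · rw [Finset.erase_eq_of_notMem h0]
  rw [hdrop]
  have hbound : ∑ v ∈ (Finset.univ.image pt).erase 0, |∑ t, if pt t = v then pt t - y t else 0|
      ≤ ∑ _v ∈ (Finset.univ.image pt).erase 0, (1 : ℝ) := by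
    apply Finset.sum_le_sum
    intro v hv
    have hv' := hv01 v (Finset.mem_of_mem_erase hv)
    have hk := key T v hv'.1 hv'.2
    rw [hfinal v]
    rw [abs_le]
    constructor <;> linarith [hk.1, hk.2]
  have hcard : ((Finset.univ.image pt).erase 0).card ≤ m := by
    have h1 : (Finset.univ.image pt).erase 0 ⊆ G.erase 0 :=
      Finset.erase_subset_erase _ hsub
    have h2 := Finset.card_le_card h1
    have h3 : (G.erase 0).card = G.card - 1 := Finset.card_erase_of_mem h0G
    have h4 : G.card ≤ m + 1 := le_trans (Finset.card_image_le) (by simp)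
    omega
  calc ∑ v ∈ (Finset.univ.image pt).erase 0, |∑ t, if pt t = v then pt t - y t else 0|
      ≤ ∑ _v ∈ (Finset.univ.image pt).erase 0, (1 : ℝ) := hbound
    _ = ((Finset.univ.image pt).erase 0).card := by simp
    _ ≤ m := by exact_mod_cast hcard
end

section
/- Suppose a predictor makes predictions p̃^t ∈ B_m such that each bin p ∈ B_m is used at most as dictated by the One-Step-Ahead rule (the increment p̃^t − y^t is zero or opposite in sign to the running bias of bin p̃^t). Then CalDist(p̃^{1:T}, y^{1:T}) ≤ m + 1, where the bound m + 1 accounts for |B_m| = m + 1 bins each with bias at most 1. -/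
open Finset
open scoped Classical

theorem calDist_le_bins {T m : ℕ} (hm : 1 ≤ m)
    (y pt : Fin T → ℝ)
    (hy : ∀ t, y t = 0 ∨ y t = 1)
    (hgrid : ∀ t : Fin T, ∃ i : ℕ, i ≤ m ∧ pt t = (i : ℝ) / m)
    (hsign : ∀ t : Fin T, bias pt y t (pt t) * (pt t - y t) ≤ 0) :
    calDist pt y ≤ (m : ℝ) + 1 := by
  classical
  have hmpos : (0 : ℝ) < m := by exact_mod_cast hm
  have hp0 : ∀ t : Fin T, 0 ≤ pt t ∧ pt t ≤ 1 := by
    intro t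
    obtain ⟨i, hi, hpi⟩ := hgrid t
    refine ⟨by rw [hpi]; positivity, ?_⟩
    rw [hpi, div_le_one hmpos]
    exact_mod_cast hi
  have hd : ∀ t : Fin T, |pt t - y t| ≤ 1 := by
    intro t
    rcases hy t with h | h <;> rcases hp0 t with ⟨h0, h1⟩ <;>
      rw [abs_le] <;> constructor <;> linarith
  have key : ∀ a d : ℝ, |a| ≤ 1 → |d| ≤ 1 → a * d ≤ 0 → |a + d| ≤ 1 := by
    intro a d ha hdd h
    rw [abs_le] at *
    constructor <;> nlinarith [ha.1, ha.2, hdd.1, hdd.2]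
  -- bias is always bounded by 1
  have hbias : ∀ (t : ℕ) (v : ℝ), |bias pt y t v| ≤ 1 := by
    intro t
    induction t with
    | zero => intro v; simp [bias]
    | succ t ih =>
      intro v
      have hsplit : (univ.filter (fun s : Fin T => (s : ℕ) < t + 1))
          = (univ.filter (fun s : Fin T => (s : ℕ) < t))
            ∪ (univ.filter (fun s : Fin T => (s : ℕ) = t)) := by
        ext s
        simp only [mem_filter, mem_union, mem_univ, true_and]
        omega
      have hdisj : Disjoint (univ.filter (fun s : Fin T => (s : ℕ) < t))
          (univ.filter (fun s : Fin T => (s : ℕ) = t)) := by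
        rw [Finset.disjoint_left]
        intro s hs hs'
        simp only [mem_filter, mem_univ, true_and] at hs hs'
        omega
      have hstep : bias pt y (t + 1) v = bias pt y t v
          + ∑ s ∈ univ.filter (fun s : Fin T => (s : ℕ) = t),
              (if pt s = v then pt s - y s else 0) := by
        rw [bias, hsplit, Finset.sum_union hdisj]; rfl
      by_cases hT : t < T
      · have hfs : univ.filter (fun s : Fin T => (s : ℕ) = t) = {⟨t, hT⟩} := by
          ext s
          simp only [mem_filter, mem_univ, true_and, mem_singleton, Fin.ext_iff]
        rw [hstep, hfs, Finset.sum_singleton]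
        by_cases hv : pt ⟨t, hT⟩ = v
        · have hs := hsign ⟨t, hT⟩
          rw [hv] at hs
          have hd' := hd ⟨t, hT⟩
          rw [hv] at hd'
          rw [if_pos hv, hv]
          exact key _ _ (ih v) hd' hs
        · rw [if_neg hv, add_zero]
          exact ih v
      · have hfs : univ.filter (fun s : Fin T => (s : ℕ) = t) = ∅ := by
          ext s
          simp only [mem_filter, mem_univ, true_and, notMem_empty, iff_false]
          have := s.isLt
          omega
        rw [hstep, hfs, Finset.sum_empty, add_zero]
        exact ih v
  -- bins
  set B : Finset ℝ := Finset.univ.image pt with hB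
  have hcard : B.card ≤ m + 1 := by
    have hsub : B ⊆ (Finset.range (m + 1)).image (fun i : ℕ => (i : ℝ) / m) := by
      intro v hv
      simp only [hB, mem_image, mem_univ, true_and] at hv
      obtain ⟨t, ht⟩ := hv
      obtain ⟨i, hi, hpi⟩ := hgrid t
      simp only [mem_image, mem_range]
      exact ⟨i, Nat.lt_succ_of_le hi, by rw [← ht, hpi]⟩
    calc B.card ≤ _ := card_le_card hsub
      _ ≤ (Finset.range (m + 1)).card := card_image_le
      _ = m + 1 := card_range _
  -- fibers and averages
  set fib : ℝ → Finset (Fin T) := fun v => univ.filter (fun s => pt s = v) with hfib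
  set A : ℝ → ℝ := fun v => (∑ s ∈ fib v, y s) / (fib v).card with hA
  set q : Fin T → ℝ := fun t => A (pt t) with hq
  have hqconst : ∀ v, ∀ s ∈ fib v, q s = A v := by
    intro v s hs
    have : pt s = v := (mem_filter.mp hs).2
    simp [hq, this]
  have hptconst : ∀ v, ∀ s ∈ fib v, pt s = v := by
    intro v s hs; exact (mem_filter.mp hs).2
  have hNA : ∀ v : ℝ, (fib v).Nonempty → ((fib v).card : ℝ) * A v = ∑ s ∈ fib v, y s := by
    intro v hne
    have hc : ((fib v).card : ℝ) ≠ 0 := by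
      have := Finset.card_pos.mpr hne
      positivity
    rw [hA]
    field_simp
  have hfz : ∀ v : ℝ, (fib v).Nonempty → ∑ s ∈ fib v, (q s - y s) = 0 := by
    intro v hne
    have : ∑ s ∈ fib v, (q s - y s) = ∑ s ∈ fib v, (A v - y s) :=
      Finset.sum_congr rfl (fun s hs => by rw [hqconst v s hs])
    rw [this, Finset.sum_sub_distrib, Finset.sum_const, nsmul_eq_mul, hNA v hne, sub_self]
  have hmaps : ∀ x ∈ (univ : Finset (Fin T)), pt x ∈ B :=
    fun x _ => mem_image_of_mem pt (mem_univ x)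
  have hBne : ∀ v ∈ B, (fib v).Nonempty := by
    intro v hv
    simp only [hB, mem_image, mem_univ, true_and] at hv
    obtain ⟨t, ht⟩ := hv
    exact ⟨t, by simp [hfib, ht]⟩
  -- ECE of q is 0
  have hECEq : ECE q y = 0 := by
    rw [ECE]
    apply Finset.sum_eq_zero
    intro w _
    rw [abs_eq_zero]
    rw [← Finset.sum_fiberwise_of_maps_to hmaps (fun t => if q t = w then q t - y t else 0)]
    apply Finset.sum_eq_zero
    intro v hv
    have hrw : ∑ s ∈ univ.filter (fun s => pt s = v), (if q s = w then q s - y s else 0)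
        = ∑ s ∈ fib v, (if A v = w then q s - y s else 0) := by
      apply Finset.sum_congr rfl
      intro s hs
      rw [hqconst v s hs]
    rw [hrw]
    by_cases h : A v = w
    · simp only [h, if_true]
      exact hfz v (hBne v hv)
    · simp [h]
  -- transport cost bound
  have hcost : ∑ t, |pt t - q t| ≤ (m : ℝ) + 1 := by
    rw [← Finset.sum_fiberwise_of_maps_to hmaps (fun t => |pt t - q t|)]
    have hstepv : ∀ v ∈ B, ∑ s ∈ univ.filter (fun s => pt s = v), |pt s - q s| ≤ 1 := by
      intro v hv
      have h1 : ∑ s ∈ fib v, |pt s - q s| = |∑ s ∈ fib v, (pt s - y s)| := by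
        have e1 : ∑ s ∈ fib v, |pt s - q s| = ∑ s ∈ fib v, |v - A v| :=
          Finset.sum_congr rfl (fun s hs => by rw [hqconst v s hs, hptconst v s hs])
        have e2 : ∑ s ∈ fib v, (pt s - y s) = ((fib v).card : ℝ) * (v - A v) := by
          have : ∑ s ∈ fib v, (pt s - y s) = ∑ s ∈ fib v, (v - y s) :=
            Finset.sum_congr rfl (fun s hs => by rw [hptconst v s hs])
          rw [this, Finset.sum_sub_distrib, Finset.sum_const, nsmul_eq_mul,
            mul_sub, hNA v (hBne v hv)]
        rw [e1, e2, Finset.sum_const, nsmul_eq_mul, abs_mul, abs_of_nonneg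
          (by positivity : (0:ℝ) ≤ ((fib v).card : ℝ))]
      have h2 : ∑ s ∈ fib v, (pt s - y s) = bias pt y T v := by
        rw [bias]
        have : univ.filter (fun s : Fin T => (s : ℕ) < T) = univ := by
          apply Finset.filter_true_of_mem
          intro s _
          exact s.isLt
        rw [this, ← Finset.sum_filter]
      rw [show (univ.filter (fun s => pt s = v)) = fib v from rfl, h1, h2]
      exact hbias T v
    calc ∑ v ∈ B, ∑ s ∈ univ.filter (fun s => pt s = v), |pt s - q s|
        ≤ ∑ v ∈ B, (1 : ℝ) := Finset.sum_le_sum hstepv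
      _ = B.card := by rw [Finset.sum_const, nsmul_eq_mul, mul_one]
      _ ≤ (m : ℝ) + 1 := by exact_mod_cast hcard
  -- conclude
  have hmem : (∑ t, |pt t - q t|) ∈
      {c | ∃ q' : Fin T → ℝ, ECE q' y = 0 ∧ c = ∑ t, |pt t - q' t|} := ⟨q, hECEq, rfl⟩
  have hbdd : BddBelow {c | ∃ q' : Fin T → ℝ, ECE q' y = 0 ∧ c = ∑ t, |pt t - q' t|} := by
    refine ⟨0, ?_⟩
    rintro c ⟨q', -, rfl⟩
    positivity
  exact le_trans (csInf_le hbdd hmem) hcost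
end
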